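/- arXiv:2111.04849 — 4 statements merged into one kernel-verified Lean document; each statement's English description precedes it below -/
import Mathlib

section
/- Let λ be the unique real root of x³ − x² − 2x − 4 and let M be the 3×3 real matrix with rows (1,2,0), (1,0,2), (1,0,0). Then the vector v = (λ − 2, (λ² − 4)/λ², (λ − 2)/λ) satisfies M · v = λ · v, all three entries of v are strictly positive, and the entries of v sum to 1. -/
/-- Let `l` be the (unique) real root of `x³ − x² − 2x − 4` and `M` the real
matrix with rows (1,2,0), (1,0,2), (1,0,0). Then the vector
`v = (l − 2, (l² − 4)/l², (l − 2)/l)` satisfies `M · v = l • v`, all its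
entries are strictly positive, and they sum to 1. -/
theorem stmt_3 (l : ℝ) (hl : l ^ 3 - l ^ 2 - 2 * l - 4 = 0) :
    let M : Matrix (Fin 3) (Fin 3) ℝ := !![1, 2, 0; 1, 0, 2; 1, 0, 0]
    let v : Fin 3 → ℝ := ![l - 2, (l ^ 2 - 4) / l ^ 2, (l - 2) / l]
    M.mulVec v = l • v ∧ (∀ i, 0 < v i) ∧ ∑ i, v i = 1 := by
  intro M v
  have h2 : 2 < l := by
    by_contra h
    push_neg at h
    nlinarith [sq_nonneg l, sq_nonneg (l - 2), sq_nonneg (l + 1), sq_nonneg (l * l - 1)]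
  have hne : l ≠ 0 := by linarith
  refine ⟨?_, ?_, ?_⟩
  · funext i
    fin_cases i <;>
      simp [M, v, Matrix.mulVec, dotProduct, Fin.sum_univ_three] <;>
      field_simp <;> ring_nf <;> nlinarith [hl, sq_nonneg l]
  · intro i
    fin_cases i
    · simpa [v] using by linarith
    · have : 0 < l ^ 2 - 4 := by nlinarith
      exact div_pos this (by positivity)
    · exact div_pos (by linarith) (by linarith)
  · simp [v, Fin.sum_univ_three]
    field_simp
    ring_nf
    nlinarith [hl]
end

section
/- Let λ be the unique real root of x³ − x² − 2x − 4 and let φ = (1 + √5)/2. Then there exists a unique real number D > 0 such that λ · ((λ − 2) · φ^(−D) + ((λ² − 4)/λ²) · φ^(−2·D) + ((λ − 2)/λ) · φ^(−D)) = 1, and this D satisfies 1.478 < D < 1.4782. -/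
/-!
Write `x = φ ^ D`. Since `l (l - 2) (l + 1) = l³ - l² - 2l = 4`, multiplying the equation by
`l x²` turns it into `l x² - 4x - (l² - 4) = 0`. For `l > 2` this quadratic is strictly increasing
on `[1, ∞)`, so `D ↦ l φ^(2D) - 4 φ^D - (l² - 4)` is strictly increasing on `[0, ∞)` and has at
most one zero there. It changes sign between `1.478` and `1.4782` by rational bounds on `l` and
`φ`; comparing `φ ^ (p / q)` with a rational reduces to an exact comparison of powers of
natural numbers.
-/

open Set Real

theorem StrictMonoOn.exists_mem_Ioo_forall_eq_iff {α δ : Type*}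
    [ConditionallyCompleteLinearOrder α] [TopologicalSpace α] [OrderTopology α]
    [DenselyOrdered α] [LinearOrder δ] [TopologicalSpace δ] [OrderClosedTopology δ]
    {f : α → δ} {s : Set α} {a b : α} {c : δ} (hf : StrictMonoOn f s) (hab : a ≤ b)
    (hs : Icc a b ⊆ s) (hcont : ContinuousOn f (Icc a b)) (ha : f a < c) (hb : c < f b) :
    ∃ x ∈ Ioo a b, ∀ y ∈ s, f y = c ↔ y = x := by
  obtain ⟨x, hx, hfx⟩ := intermediate_value_Ioo hab hcont ⟨ha, hb⟩
  refine ⟨x, hx, fun y hy => ⟨fun hfy => ?_, fun h => h ▸ hfx⟩⟩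
  exact hf.injOn hy (hs (Ioo_subset_Icc_self hx)) (hfy.trans hfx.symm)

theorem Real.rpow_natCast_div_lt_of_pow_lt {x r : ℝ} {m n : ℕ} (hx : 0 ≤ x) (hr : 0 ≤ r)
    (hn : n ≠ 0) (h : x ^ m < r ^ n) : x ^ ((m : ℝ) / n) < r := by
  refine lt_of_pow_lt_pow_left₀ n hr ?_
  rwa [← rpow_mul_natCast hx, div_mul_cancel₀ _ (Nat.cast_ne_zero.2 hn), rpow_natCast]

theorem Real.lt_rpow_natCast_div_of_pow_lt {x r : ℝ} {m n : ℕ} (hx : 0 ≤ x) (hn : n ≠ 0)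
    (h : r ^ n < x ^ m) : r < x ^ ((m : ℝ) / n) := by
  refine lt_of_pow_lt_pow_left₀ n (rpow_nonneg hx _) ?_
  rwa [← rpow_mul_natCast hx, div_mul_cancel₀ _ (Nat.cast_ne_zero.2 hn), rpow_natCast]

theorem natCast_div_pow_lt_natCast_div_pow {a b c d m n : ℕ} (hb : 0 < b) (hd : 0 < d)
    (h : a ^ m * d ^ n < c ^ n * b ^ m) : ((a : ℝ) / b) ^ m < ((c : ℝ) / d) ^ n := by
  rw [div_pow, div_pow, div_lt_div_iff₀ (by positivity) (by positivity)]
  exact_mod_cast h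

theorem goldenRatio_mem_Ioo : goldenRatio ∈ Ioo (1618033 / 1000000) (40451 / 25000) := by
  have h5 : √5 ^ 2 = 5 := sq_sqrt (by norm_num)
  have : 0 < √5 := by positivity
  constructor <;> unfold goldenRatio <;> nlinarith

theorem goldenRatio_rpow_739_div_500_lt : goldenRatio ^ ((739 : ℝ) / 500) < 10183 / 5000 := by
  have hpow : goldenRatio ^ 739 < (10183 / 5000 : ℝ) ^ 500 := calc
    goldenRatio ^ 739 < (40451 / 25000 : ℝ) ^ 739 :=
      pow_lt_pow_left₀ goldenRatio_mem_Ioo.2 goldenRatio_pos.le (by norm_num)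
    _ < (10183 / 5000 : ℝ) ^ 500 := by
      simpa only [Nat.cast_ofNat] using natCast_div_pow_lt_natCast_div_pow (a := 40451)
        (b := 25000) (c := 10183) (d := 5000) (m := 739) (n := 500) (by norm_num) (by norm_num)
        (by decide +kernel)
  simpa only [Nat.cast_ofNat] using rpow_natCast_div_lt_of_pow_lt (m := 739) (n := 500)
    goldenRatio_pos.le (by norm_num) (by norm_num) hpow

theorem lt_goldenRatio_rpow_7391_div_5000 :
    50917 / 25000 < goldenRatio ^ ((7391 : ℝ) / 5000) := by
  have hpow : (50917 / 25000 : ℝ) ^ 5000 < goldenRatio ^ 7391 := calc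
    (50917 / 25000 : ℝ) ^ 5000 < (1618033 / 1000000 : ℝ) ^ 7391 := by
      simpa only [Nat.cast_ofNat] using natCast_div_pow_lt_natCast_div_pow (a := 50917)
        (b := 25000) (c := 1618033) (d := 1000000) (m := 5000) (n := 7391) (by norm_num)
        (by norm_num) (by decide +kernel)
    _ < goldenRatio ^ 7391 := pow_lt_pow_left₀ goldenRatio_mem_Ioo.1 (by norm_num) (by norm_num)
  simpa only [Nat.cast_ofNat] using lt_rpow_natCast_div_of_pow_lt (m := 7391) (n := 5000)
    goldenRatio_pos.le (by norm_num) hpow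

theorem cubic_root_mem_Ioo {l : ℝ} (hl : l ^ 3 - l ^ 2 - 2 * l - 4 = 0) :
    l ∈ Ioo 2.4675 2.46751 := by
  constructor
  · nlinarith [sq_nonneg (l + 1), sq_nonneg l, sq_nonneg (2 * l + 1.4675)]
  · nlinarith [sq_nonneg (l + 1), sq_nonneg l, sq_nonneg (l - 2.46751)]

def dimQuadratic (l x : ℝ) : ℝ := l * x ^ 2 - 4 * x - (l ^ 2 - 4)

theorem similarity_equation_iff {b l D : ℝ} (hb : 0 < b) (hl : l ^ 3 - l ^ 2 - 2 * l - 4 = 0) :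
    l * ((l - 2) * b ^ (-D) + ((l ^ 2 - 4) / l ^ 2) * b ^ (-(2 * D)) +
      ((l - 2) / l) * b ^ (-D)) = 1 ↔ dimQuadratic l (b ^ D) = 0 := by
  have hl0 : l ≠ 0 := by rintro rfl; norm_num at hl
  have hx : 0 < b ^ D := rpow_pos_of_pos hb D
  rw [rpow_neg hb.le, rpow_neg hb.le, mul_comm 2 D, rpow_mul hb.le, rpow_two, dimQuadratic,
    ← sub_eq_zero]
  generalize b ^ D = x at hx
  have : l * ((l - 2) * x⁻¹ + ((l ^ 2 - 4) / l ^ 2) * (x ^ 2)⁻¹ + ((l - 2) / l) * x⁻¹) - 1 =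
      -(l * x ^ 2 - 4 * x - (l ^ 2 - 4)) / (l * x ^ 2) := by
    field_simp
    linear_combination x * hl
  rw [this, neg_div, neg_eq_zero, div_eq_zero_iff, or_iff_left (by positivity)]

theorem strictMonoOn_dimQuadratic {l : ℝ} (hl : 2 ≤ l) :
    StrictMonoOn (dimQuadratic l) (Ici 1) := by
  intro x hx y hy hxy
  have hdiff : dimQuadratic l y - dimQuadratic l x = (y - x) * (l * (x + y) - 4) := by
    unfold dimQuadratic; ring
  have hfactor : 0 < l * (x + y) - 4 := by
    simp only [mem_Ici] at hx hy; nlinarith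
  rw [← sub_pos, hdiff]
  exact mul_pos (sub_pos.2 hxy) hfactor

-- The positive root of `dimQuadratic l` is `≈ 2.036668`; the rationals below separate it from
-- `φ ^ 1.478 ≈ 2.036497` and `φ ^ 1.4782 ≈ 2.036693`.
theorem dimQuadratic_10183_div_5000_neg {l : ℝ} (hl : l ∈ Ioo 2.4675 2.46751) :
    dimQuadratic l (10183 / 5000) < 0 := by
  unfold dimQuadratic; nlinarith [hl.1, hl.2]

theorem dimQuadratic_50917_div_25000_pos {l : ℝ} (hl : l ∈ Ioo 2.4675 2.46751) :
    0 < dimQuadratic l (50917 / 25000) := by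
  unfold dimQuadratic; nlinarith [hl.1, hl.2]

theorem exists_mem_Ioo_forall_dimQuadratic_goldenRatio_rpow_eq_zero_iff {l : ℝ}
    (hl : l ∈ Ioo 2.4675 2.46751) :
    ∃ D₀ ∈ Ioo ((739 : ℝ) / 500) (7391 / 5000),
      ∀ D : ℝ, 0 ≤ D → (dimQuadratic l (goldenRatio ^ D) = 0 ↔ D = D₀) := by
  have hq := strictMonoOn_dimQuadratic (by linarith [hl.1] : 2 ≤ l)
  have hone : ∀ D : ℝ, 0 ≤ D → 1 ≤ goldenRatio ^ D := fun D => one_le_rpow one_lt_goldenRatio.le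
  have hmono : StrictMonoOn (fun D : ℝ => dimQuadratic l (goldenRatio ^ D)) (Ici 0) :=
    fun x hx y hy hxy =>
      hq (hone x hx) (hone y hy) (rpow_lt_rpow_of_exponent_lt one_lt_goldenRatio hxy)
  have hcont : Continuous fun D : ℝ => dimQuadratic l (goldenRatio ^ D) := by
    have := goldenRatio_ne_zero
    unfold dimQuadratic; fun_prop (disch := assumption)
  have hlow : dimQuadratic l (goldenRatio ^ ((739 : ℝ) / 500)) < 0 :=
    ((hq.lt_iff_lt (hone _ (by norm_num)) (by norm_num)).2
      goldenRatio_rpow_739_div_500_lt).trans (dimQuadratic_10183_div_5000_neg hl)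
  have hhigh : 0 < dimQuadratic l (goldenRatio ^ ((7391 : ℝ) / 5000)) :=
    (dimQuadratic_50917_div_25000_pos hl).trans
      ((hq.lt_iff_lt (by norm_num) (hone _ (by norm_num))).2 lt_goldenRatio_rpow_7391_div_5000)
  have hab : (739 / 500 : ℝ) ≤ 7391 / 5000 := by norm_num
  exact hmono.exists_mem_Ioo_forall_eq_iff hab (Icc_subset_Ici_iff hab |>.2 (by norm_num))
    hcont.continuousOn hlow hhigh

/-- Let `l` be the (unique) real root of `x³ − x² − 2x − 4` and
`φ = (1 + √5)/2`. Then there is a unique `D > 0` with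
`l · ((l − 2) φ^(−D) + ((l² − 4)/l²) φ^(−2D) + ((l − 2)/l) φ^(−D)) = 1`,
and this `D` satisfies `1.478 < D < 1.4782`. -/
theorem stmt_12 (l : ℝ) (hl : l ^ 3 - l ^ 2 - 2 * l - 4 = 0) :
    let φ : ℝ := (1 + Real.sqrt 5) / 2
    (∃! D : ℝ, 0 < D ∧
      l * ((l - 2) * φ ^ (-D) + ((l ^ 2 - 4) / l ^ 2) * φ ^ (-(2 * D)) +
        ((l - 2) / l) * φ ^ (-D)) = 1) ∧
    ∀ D : ℝ, 0 < D →
      l * ((l - 2) * φ ^ (-D) + ((l ^ 2 - 4) / l ^ 2) * φ ^ (-(2 * D)) +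
        ((l - 2) / l) * φ ^ (-D)) = 1 →
      1.478 < D ∧ D < 1.4782 := by
  intro φ
  have hφ : φ = goldenRatio := rfl
  clear_value φ
  subst hφ
  simp only [similarity_equation_iff goldenRatio_pos hl]
  obtain ⟨D₀, hD₀, hiff⟩ :=
    exists_mem_Ioo_forall_dimQuadratic_goldenRatio_rpow_eq_zero_iff (cubic_root_mem_Ioo hl)
  have hD₀pos : 0 < D₀ := by linarith [hD₀.1]
  refine ⟨⟨D₀, ⟨hD₀pos, (hiff D₀ hD₀pos.le).2 rfl⟩, fun D hD => (hiff D hD.1.le).1 hD.2⟩,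
    fun D hD hD_eq => ?_⟩
  rw [(hiff D hD.le).1 hD_eq]
  exact ⟨by linarith [hD₀.1], by linarith [hD₀.2]⟩
end

section
/- Let M be the 3×3 real matrix with rows (1,2,0), (1,0,2), (1,0,0), let λ be the unique real root of x³ − x² − 2x − 4, and let v = (λ − 2, (λ² − 4)/λ², (λ − 2)/λ). For every vector u : Fin 3 → ℝ with u i ≥ 0 for all i and u ≠ 0, there exists a real constant c > 0 such that the sequence k ↦ (1/λ^k) · (M^k · u) converges to c • v. -/
/-!
`M` has the simple eigenvalue `l`, with right eigenvector `v` and positive left eigenvector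
`σ = (l², 2l, 4)`. Write `u = (σ ⬝ u / σ ⬝ v) v + w` with `σ ⬝ w = 0`. The plane `σᗮ` is
`M`-invariant, and there `M² = (1 - l) M - (l² - l - 2)`, so every coordinate of `Mᵏ w` obeys a
two-term linear recurrence `x (k+2) = b x (k+1) - p x k` with `b² < 4p`. Along such a recurrence
the positive definite form `x (k+1)² - b x k x (k+1) + p x k²` is multiplied by `p` at each step,
so `x k = O(√p ^ k)`, and `√p < l` makes `Mᵏ w / lᵏ → 0`.
-/

open Filter Topology Matrix

section LinearRecurrence

variable {b p : ℝ} {x : ℕ → ℝ}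

theorem energy_eq_pow_mul_of_recurrence (hx : ∀ k, x (k + 2) = b * x (k + 1) - p * x k) (k : ℕ) :
    x (k + 1) ^ 2 - b * x k * x (k + 1) + p * x k ^ 2 =
      p ^ k * (x 1 ^ 2 - b * x 0 * x 1 + p * x 0 ^ 2) := by
  induction k with
  | zero => simp
  | succ k ih => rw [hx k]; linear_combination p * ih

theorem sq_le_pow_mul_of_recurrence (hx : ∀ k, x (k + 2) = b * x (k + 1) - p * x k) (k : ℕ) :
    (4 * p - b ^ 2) * x k ^ 2 ≤ 4 * (p ^ k * (x 1 ^ 2 - b * x 0 * x 1 + p * x 0 ^ 2)) := by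
  rw [← energy_eq_pow_mul_of_recurrence hx k]
  nlinarith [sq_nonneg (2 * x (k + 1) - b * x k)]

theorem tendsto_div_pow_of_recurrence {l : ℝ} (hdisc : b ^ 2 < 4 * p) (hpl : p < l ^ 2)
    (hx : ∀ k, x (k + 2) = b * x (k + 1) - p * x k) :
    Tendsto (fun k => x k / l ^ k) atTop (𝓝 0) := by
  have hp : 0 < p := by nlinarith [sq_nonneg b]
  have hl : 0 < l ^ 2 := hp.trans hpl
  set C := 4 * (x 1 ^ 2 - b * x 0 * x 1 + p * x 0 ^ 2) / (4 * p - b ^ 2)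
  have hbound : ∀ k, (x k / l ^ k) ^ 2 ≤ C * (p / l ^ 2) ^ k := fun k => by
    rw [div_pow, div_pow, ← pow_mul, pow_mul', mul_div_assoc',
      div_le_div_iff_of_pos_right (by positivity), div_mul_eq_mul_div, le_div_iff₀ (by linarith)]
    nlinarith [sq_le_pow_mul_of_recurrence hx k]
  have hsq : Tendsto (fun k => (x k / l ^ k) ^ 2) atTop (𝓝 0) := by
    refine squeeze_zero (fun k => sq_nonneg _) hbound ?_
    simpa using (tendsto_pow_atTop_nhds_zero_of_lt_one (by positivity)
      ((div_lt_one hl).2 hpl)).const_mul C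
  rw [tendsto_zero_iff_abs_tendsto_zero]
  simpa [Function.comp_def, Real.sqrt_sq_eq_abs] using hsq.sqrt

theorem tendsto_inv_pow_smul_of_recurrence {ι : Type*} {l : ℝ} {W : ℕ → ι → ℝ}
    (hdisc : b ^ 2 < 4 * p) (hpl : p < l ^ 2)
    (hW : ∀ k, W (k + 2) = b • W (k + 1) - p • W k) :
    Tendsto (fun k => (1 / l ^ k) • W k) atTop (𝓝 0) := by
  refine tendsto_pi_nhds.2 fun i => ?_
  simpa [one_div, inv_mul_eq_div] using tendsto_div_pow_of_recurrence (x := fun k => W k i)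
    hdisc hpl fun k => by simp [hW k]

end LinearRecurrence

theorem Matrix.dotProduct_pos_of_pos_of_nonneg {n : Type*} [Fintype n] {σ u : n → ℝ}
    (hσ : ∀ i, 0 < σ i) (hu : ∀ i, 0 ≤ u i) (hu0 : u ≠ 0) : 0 < σ ⬝ᵥ u := by
  obtain ⟨i, hi⟩ := Function.ne_iff.mp hu0
  exact Finset.sum_pos' (fun j _ => mul_nonneg (hσ j).le (hu j))
    ⟨i, Finset.mem_univ i, mul_pos (hσ i) ((hu i).lt_of_ne' hi)⟩

namespace Matrix

variable {n : Type*} [Fintype n] [DecidableEq n] {A : Matrix n n ℝ} {l : ℝ}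

theorem pow_mulVec_of_mulVec_eq_smul {e : n → ℝ} (he : A *ᵥ e = l • e) (k : ℕ) :
    (A ^ k) *ᵥ e = l ^ k • e := by
  induction k with
  | zero => simp
  | succ k ih => rw [pow_succ', ← mulVec_mulVec, ih, mulVec_smul, he, smul_smul, ← pow_succ]

theorem dotProduct_pow_mulVec_of_vecMul_eq_smul {σ : n → ℝ} (hσ : σ ᵥ* A = l • σ)
    (z : n → ℝ) (k : ℕ) : σ ⬝ᵥ ((A ^ k) *ᵥ z) = l ^ k * σ ⬝ᵥ z := by
  induction k with
  | zero => simp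
  | succ k ih => rw [pow_succ', ← mulVec_mulVec, dotProduct_mulVec, hσ, smul_dotProduct, ih,
      smul_eq_mul, ← mul_assoc, ← pow_succ']

/-- The spectral gap is encoded by `hker`: on the complement `σᗮ` of the `l`-eigenline, `A`
satisfies a real quadratic whose complex roots have modulus `√p < l`. -/
theorem tendsto_inv_pow_smul_pow_mulVec {e σ : n → ℝ} {b p : ℝ}
    (he : A *ᵥ e = l • e) (hσ : σ ᵥ* A = l • σ) (hσe : σ ⬝ᵥ e ≠ 0)
    (hker : ∀ z, σ ⬝ᵥ z = 0 → A *ᵥ (A *ᵥ z) = b • A *ᵥ z - p • z)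
    (hdisc : b ^ 2 < 4 * p) (hpl : p < l ^ 2) (u : n → ℝ) :
    Tendsto (fun k : ℕ => (1 / l ^ k) • (A ^ k) *ᵥ u) atTop
      (𝓝 ((σ ⬝ᵥ u / σ ⬝ᵥ e) • e)) := by
  have hl : l ≠ 0 := by rintro rfl; nlinarith [sq_nonneg b]
  set a := σ ⬝ᵥ u / σ ⬝ᵥ e
  set w := u - a • e
  have hw : σ ⬝ᵥ w = 0 := by
    simp only [w, dotProduct_sub, dotProduct_smul, smul_eq_mul, a, div_mul_cancel₀ _ hσe, sub_self]
  have hrec : ∀ k, (A ^ (k + 2)) *ᵥ w = b • (A ^ (k + 1)) *ᵥ w - p • (A ^ k) *ᵥ w := fun k => by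
    have := hker _ ((dotProduct_pow_mulVec_of_vecMul_eq_smul hσ w k).trans (by rw [hw, mul_zero]))
    simpa only [mulVec_mulVec, ← pow_succ'] using this
  have hsplit : ∀ k : ℕ, (1 / l ^ k) • (A ^ k) *ᵥ u = a • e + (1 / l ^ k) • (A ^ k) *ᵥ w :=
    fun k => by
      rw [show u = a • e + w by simp [w], mulVec_add, mulVec_smul,
        pow_mulVec_of_mulVec_eq_smul he, smul_add, smul_smul, smul_smul]
      congr 2
      field_simp
  simp only [hsplit]
  simpa using (tendsto_inv_pow_smul_of_recurrence hdisc hpl hrec).const_add (a • e)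

end Matrix

section SubstitutionMatrix

theorem substMatrix_mulVec (z : Fin 3 → ℝ) :
    !![1, 2, 0; 1, 0, 2; 1, 0, 0] *ᵥ z = ![z 0 + 2 * z 1, z 0 + 2 * z 2, z 0] := by
  ext i; fin_cases i <;> simp [mulVec, dotProduct, Fin.sum_univ_three]

theorem vecMul_substMatrix (z : Fin 3 → ℝ) :
    z ᵥ* !![1, 2, 0; 1, 0, 2; 1, 0, 0] = ![z 0 + z 1 + z 2, 2 * z 0, 2 * z 1] := by
  ext i; fin_cases i <;> simp [vecMul, dotProduct, Fin.sum_univ_three, mul_comm]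

variable {l : ℝ} (hl : l ^ 3 - l ^ 2 - 2 * l - 4 = 0)
include hl

theorem twelve_fifths_lt_of_root : 12 / 5 < l := by
  nlinarith [sq_nonneg (l - 12 / 5), sq_nonneg (l + 1), sq_nonneg l, sq_nonneg (l + 2),
    sq_nonneg (l - 1), sq_nonneg (l * l - 2 * l)]

theorem substMatrix_mulVec_eigenvector :
    !![1, 2, 0; 1, 0, 2; 1, 0, 0] *ᵥ ![l - 2, (l ^ 2 - 4) / l ^ 2, (l - 2) / l] =
      l • ![l - 2, (l ^ 2 - 4) / l ^ 2, (l - 2) / l] := by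
  have : l ≠ 0 := by linarith [twelve_fifths_lt_of_root hl]
  rw [substMatrix_mulVec, smul_vec3]
  simp only [cons_val_zero, cons_val_one, cons_val_two, head_cons, tail_cons, smul_eq_mul]
  refine vec3_eq ?_ ?_ ?_ <;> field_simp
  · linear_combination (2 - l) * hl
  · ring

theorem vecMul_substMatrix_leftEigenvector :
    ![l ^ 2, 2 * l, 4] ᵥ* !![1, 2, 0; 1, 0, 2; 1, 0, 0] = l • ![l ^ 2, 2 * l, 4] := by
  rw [vecMul_substMatrix, smul_vec3]
  simp only [cons_val_zero, cons_val_one, cons_val_two, head_cons, tail_cons, smul_eq_mul]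
  refine vec3_eq ?_ ?_ ?_
  · linear_combination -hl
  all_goals ring

/-- `X² + (l - 1) X + (l² - l - 2)` is the cofactor of `X - l` in the characteristic polynomial
`X³ - X² - 2X - 4`. -/
theorem substMatrix_sq_mulVec_of_dotProduct_eq_zero {z : Fin 3 → ℝ}
    (hz : ![l ^ 2, 2 * l, 4] ⬝ᵥ z = 0) :
    !![1, 2, 0; 1, 0, 2; 1, 0, 0] *ᵥ (!![1, 2, 0; 1, 0, 2; 1, 0, 0] *ᵥ z) =
      (1 - l) • !![1, 2, 0; 1, 0, 2; 1, 0, 0] *ᵥ z - (l ^ 2 - l - 2) • z := by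
  have hl0 : l ≠ 0 := by linarith [twelve_fifths_lt_of_root hl]
  rw [vec3_dotProduct] at hz
  simp only [cons_val_zero, cons_val_one, cons_val_two, head_cons, tail_cons] at hz
  rw [substMatrix_mulVec, substMatrix_mulVec]
  ext i
  fin_cases i <;> simp only [Fin.zero_eta, Fin.mk_one, Fin.reduceFinMk, Fin.isValue,
    cons_val_zero, cons_val_one, cons_val_two, head_cons, tail_cons, Pi.sub_apply, Pi.smul_apply,
    smul_eq_mul]
  · linear_combination hz
  · linear_combination (l - 1) / 2 * hz - z 0 / 2 * hl
  · exact mul_left_cancel₀ hl0 (by linear_combination hz + z 2 * hl)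

theorem leftEigenvector_pos (i : Fin 3) : 0 < ![l ^ 2, 2 * l, 4] i := by
  have := twelve_fifths_lt_of_root hl
  fin_cases i <;> simp only [Fin.zero_eta, Fin.mk_one, Fin.reduceFinMk, Fin.isValue,
    cons_val_zero, cons_val_one, cons_val_two, head_cons, tail_cons] <;> positivity

theorem leftEigenvector_dotProduct_eigenvector_pos :
    0 < ![l ^ 2, 2 * l, 4] ⬝ᵥ ![l - 2, (l ^ 2 - 4) / l ^ 2, (l - 2) / l] := by
  have := twelve_fifths_lt_of_root hl
  have hl0 : l ≠ 0 := by linarith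
  have hfactor : ![l ^ 2, 2 * l, 4] ⬝ᵥ ![l - 2, (l ^ 2 - 4) / l ^ 2, (l - 2) / l] =
      (l - 2) * (l ^ 2 + 2 * (l + 2) / l + 4 / l) := by
    rw [vec3_dotProduct]
    simp only [cons_val_zero, cons_val_one, cons_val_two, head_cons, tail_cons]
    field_simp
    ring
  rw [hfactor]
  exact mul_pos (by linarith) (by positivity)

end SubstitutionMatrix

/-- Convergence to the Perron–Frobenius eigenvector: with `M` the substitution
matrix, `l` its Perron–Frobenius eigenvalue (the unique real root of
`x³ − x² − 2x − 4`) and `v` the normalized right eigenvector, for every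
nonnegative nonzero vector `u` there is `c > 0` with
`(1/l^k) • (M^k · u) → c • v`. -/
theorem stmt_14 (l : ℝ) (hl : l ^ 3 - l ^ 2 - 2 * l - 4 = 0) :
    let M : Matrix (Fin 3) (Fin 3) ℝ := !![1, 2, 0; 1, 0, 2; 1, 0, 0]
    let v : Fin 3 → ℝ := ![l - 2, (l ^ 2 - 4) / l ^ 2, (l - 2) / l]
    ∀ u : Fin 3 → ℝ, (∀ i, 0 ≤ u i) → u ≠ 0 →
      ∃ c : ℝ, 0 < c ∧
        Filter.Tendsto (fun k : ℕ => (1 / l ^ k) • (M ^ k).mulVec u)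
          Filter.atTop (nhds (c • v)) := by
  intro M v u hu hu0
  have hl_gt := twelve_fifths_lt_of_root hl
  have hσv := leftEigenvector_dotProduct_eigenvector_pos hl
  refine ⟨_, div_pos (dotProduct_pos_of_pos_of_nonneg (leftEigenvector_pos hl) hu hu0) hσv, ?_⟩
  exact tendsto_inv_pow_smul_pow_mulVec (substMatrix_mulVec_eigenvector hl)
    (vecMul_substMatrix_leftEigenvector hl) hσv.ne'
    (fun _ => substMatrix_sq_mulVec_of_dotProduct_eq_zero hl) (by nlinarith) (by linarith) u
end

section
/- Let M be the 3×3 real matrix with rows (1,2,0), (1,0,2), (1,0,0), let λ be the unique real root of x³ − x² − 2x − 4, and let e₁ = (1,0,0). Then for each index i ∈ {1,2,3}, the sequence k ↦ (M^k · e₁)_i / (∑_j (M^k · e₁)_j) converges to f_i, where (f₁, f₂, f₃) = (λ − 2, (λ² − 4)/λ², (λ − 2)/λ). -/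
/-!
By Cayley–Hamilton every coordinate of `Mᵏ e₁` satisfies `aₖ₊₃ = aₖ₊₂ + 2aₖ₊₁ + 4aₖ`, whose
characteristic polynomial factors as `(X - l)(X² + (l - 1)X + 4/l)`. The quadratic factor has
complex roots of modulus `√(4/l) < l`, so `Mᵏ e₁ / lᵏ` converges to a multiple of the
eigenvector `(l², l + 2, l)`, and the relative frequencies converge to its normalization.
-/

open Filter Topology Matrix

theorem eq_pow_mul_of_succ_eq_mul {x : ℕ → ℝ} {c : ℝ} (hx : ∀ k, x (k + 1) = c * x k) (k : ℕ) :
    x k = c ^ k * x 0 := by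
  induction k with
  | zero => simp
  | succ k ih => rw [hx, ih, pow_succ]; ring

section Recurrence

variable {r : ℕ → ℝ} {b c : ℝ}

/-- The form `y² + bxy + cx²` is positive definite and gets multiplied by `c` at each step. -/
theorem exists_sq_le_mul_pow_of_recurrence (hbc : b ^ 2 < 4 * c)
    (hr : ∀ k, r (k + 2) + b * r (k + 1) + c * r k = 0) :
    ∃ C, ∀ k, r k ^ 2 ≤ C * c ^ k := by
  set Q : ℕ → ℝ := fun k ↦ r (k + 1) ^ 2 + b * r k * r (k + 1) + c * r k ^ 2
  have hQ : ∀ k, Q (k + 1) = c * Q k := fun k ↦ by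
    simp only [Q]
    linear_combination (r (k + 2) - c * r k) * hr k
  have hκ : 0 < c - b ^ 2 / 4 := by linarith
  refine ⟨Q 0 / (c - b ^ 2 / 4), fun k ↦ ?_⟩
  rw [div_mul_eq_mul_div, le_div_iff₀ hκ, mul_comm (Q 0), ← eq_pow_mul_of_succ_eq_mul hQ]
  nlinarith [sq_nonneg (r (k + 1) + b / 2 * r k)]

theorem tendsto_div_pow_of_recurrence_two {l : ℝ} (hbc : b ^ 2 < 4 * c) (hcl : c < l ^ 2)
    (hr : ∀ k, r (k + 2) + b * r (k + 1) + c * r k = 0) :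
    Tendsto (fun k ↦ r k / l ^ k) atTop (𝓝 0) := by
  obtain ⟨C, hC⟩ := exists_sq_le_mul_pow_of_recurrence hbc hr
  have hc : 0 < c := by nlinarith [sq_nonneg b]
  have hl : 0 < l ^ 2 := hc.trans hcl
  have hsq : Tendsto (fun k ↦ (r k / l ^ k) ^ 2) atTop (𝓝 0) := by
    refine squeeze_zero (fun k ↦ sq_nonneg _) (fun k ↦ ?_) (g := fun k ↦ C * (c / l ^ 2) ^ k)
      (by simpa using (tendsto_pow_atTop_nhds_zero_of_lt_one (div_pos hc hl).le
        ((div_lt_one hl).2 hcl)).const_mul C)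
    rw [div_pow, ← pow_mul, mul_comm k, pow_mul, div_pow, mul_div_assoc']
    exact div_le_div_of_nonneg_right (hC k) (pow_pos hl k).le
  rw [tendsto_zero_iff_abs_tendsto_zero]
  simpa [Real.sqrt_sq_eq_abs, Function.comp_def] using hsq.sqrt

/-- The characteristic polynomial of the recurrence is `(X - l) (X² + bX + c)`. Since
`tₖ = aₖ₊₂ + b aₖ₊₁ + c aₖ` satisfies `tₖ₊₁ = l tₖ`, subtracting `A lᵏ` for the right `A` leaves a
solution of the quadratic factor's recurrence, which is `o(lᵏ)`. -/
theorem tendsto_div_pow_of_recurrence_three {a : ℕ → ℝ} {l : ℝ} (hbc : b ^ 2 < 4 * c)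
    (hcl : c < l ^ 2)
    (ha : ∀ k, a (k + 3) + (b - l) * a (k + 2) + (c - l * b) * a (k + 1) - l * c * a k = 0) :
    Tendsto (fun k ↦ a k / l ^ k) atTop
      (𝓝 ((a 2 + b * a 1 + c * a 0) / (l ^ 2 + b * l + c))) := by
  set t : ℕ → ℝ := fun k ↦ a (k + 2) + b * a (k + 1) + c * a k
  have ht : ∀ k, t k = l ^ k * t 0 :=
    eq_pow_mul_of_succ_eq_mul fun k ↦ by simp only [t]; linear_combination ha k
  have hD : 0 < l ^ 2 + b * l + c := by nlinarith [sq_nonneg (l + b / 2)]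
  have hl : l ≠ 0 := by rintro rfl; nlinarith [sq_nonneg b]
  set A := t 0 / (l ^ 2 + b * l + c)
  have hA : A * (l ^ 2 + b * l + c) = t 0 := div_mul_cancel₀ _ hD.ne'
  set r : ℕ → ℝ := fun k ↦ a k - A * l ^ k
  have hr : ∀ k, r (k + 2) + b * r (k + 1) + c * r k = 0 := fun k ↦ by
    simp only [r]
    linear_combination ht k - l ^ k * hA
  have hlim := (tendsto_div_pow_of_recurrence_two hbc hcl hr).const_add A
  rw [add_zero] at hlim
  refine hlim.congr fun k ↦ ?_
  simp only [r]
  field_simp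
  ring

end Recurrence

theorem Filter.Tendsto.div_sum {α ι : Type*} [Fintype ι] {F : Filter α} {x : α → ι → ℝ}
    {w : α → ℝ} {u : ι → ℝ} (hw : ∀ k, w k ≠ 0)
    (hx : ∀ j, Tendsto (fun k ↦ x k j / w k) F (𝓝 (u j))) (hu : ∑ j, u j ≠ 0) (i : ι) :
    Tendsto (fun k ↦ x k i / ∑ j, x k j) F (𝓝 (u i / ∑ j, u j)) := by
  have hsum : Tendsto (fun k ↦ (∑ j, x k j) / w k) F (𝓝 (∑ j, u j)) := by
    simpa only [Finset.sum_div] using tendsto_finsetSum _ fun j _ ↦ hx j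
  exact ((hx i).div hsum hu).congr fun k ↦ div_div_div_cancel_right₀ (hw k) _ _

theorem Matrix.pow_add_three_mulVec {R n : Type*} [CommRing R] [Fintype n] [DecidableEq n]
    {A : Matrix n n R} {p q s : R} (hA : A ^ 3 = p • A ^ 2 + q • A + s • 1) (v : n → R)
    (k : ℕ) :
    A ^ (k + 3) *ᵥ v = p • (A ^ (k + 2) *ᵥ v) + q • (A ^ (k + 1) *ᵥ v) + s • (A ^ k *ᵥ v) := by
  simp only [pow_add A k, hA, mul_add, add_mulVec, Matrix.mul_smul, smul_mulVec, pow_one,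
    mul_one]

/-- Starting from the initiator `L₁` (encoded by `e₁ = (1,0,0)`), the relative
frequencies of the three line segment types in the `k`-th iteration converge
to the entries of the normalized right Perron–Frobenius eigenvector
`(l − 2, (l² − 4)/l², (l − 2)/l)`, where `l` is the unique real root of
`x³ − x² − 2x − 4`. -/
theorem stmt_15 (l : ℝ) (hl : l ^ 3 - l ^ 2 - 2 * l - 4 = 0) :
    let M : Matrix (Fin 3) (Fin 3) ℝ := !![1, 2, 0; 1, 0, 2; 1, 0, 0]
    let e₁ : Fin 3 → ℝ := ![1, 0, 0]
    let f : Fin 3 → ℝ := ![l - 2, (l ^ 2 - 4) / l ^ 2, (l - 2) / l]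
    ∀ i : Fin 3,
      Filter.Tendsto
        (fun k : ℕ => (M ^ k).mulVec e₁ i / ∑ j, (M ^ k).mulVec e₁ j)
        Filter.atTop (nhds (f i)) := by
  intro M e₁ f i
  have hl0 : l ≠ 0 := by rintro rfl; norm_num at hl
  have hM : M ^ 3 = (1 : ℝ) • M ^ 2 + (2 : ℝ) • M + (4 : ℝ) • 1 := by
    ext p q
    fin_cases p <;> fin_cases q <;>
      simp [M, pow_succ, Matrix.mul_apply, Fin.sum_univ_three] <;> norm_num
  have hbc : (l - 1) ^ 2 < 4 * (l ^ 2 - l - 2) := by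
    nlinarith [sq_nonneg (l - 2), sq_nonneg (l + 1)]
  -- `v = (M² + (l - 1) M + (l² - l - 2)) e₁` is the Perron eigenvector of `M`.
  set v : Fin 3 → ℝ := ![l ^ 2, l + 2, l]
  set D := l ^ 2 + (l - 1) * l + (l ^ 2 - l - 2)
  have hlim : ∀ j, Tendsto (fun k ↦ (M ^ k *ᵥ e₁) j / l ^ k) atTop (𝓝 (v j / D)) := by
    intro j
    convert tendsto_div_pow_of_recurrence_three (a := fun k ↦ (M ^ k *ᵥ e₁) j) (l := l) hbc
      (by nlinarith) (fun k ↦ ?_) using 3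
    · fin_cases j <;>
        simp [v, M, e₁, pow_succ, Matrix.mulVec, dotProduct, Fin.sum_univ_three] <;> ring
    · simp only [Matrix.pow_add_three_mulVec hM, Pi.add_apply, Pi.smul_apply, smul_eq_mul]
      linear_combination (-(M ^ k *ᵥ e₁) j) * hl
  have hv : ∑ j, v j = l ^ 2 + 2 * l + 2 := by simp [v, Fin.sum_univ_three]; ring
  have hv0 : l ^ 2 + 2 * l + 2 ≠ 0 := by nlinarith [sq_nonneg (l + 1)]
  have hD : D ≠ 0 := by nlinarith
  convert Tendsto.div_sum (fun k ↦ pow_ne_zero k hl0) hlim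
    (by rwa [← Finset.sum_div, hv, div_ne_zero_iff, and_iff_left hD]) i using 2
  rw [← Finset.sum_div, div_div_div_cancel_right₀ hD, hv, eq_div_iff hv0]
  fin_cases i <;> simp [f, v] <;> field_simp
  · linear_combination hl
  · linear_combination (l + 2) * hl
  · linear_combination hl
end
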